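/- arXiv:2410.24113 — 5 statements merged into one kernel-verified Lean document; each statement's English description precedes it below -/
import Mathlib

section
/- Let X be a complex vector space and let Φ : X × X → L²(Ω, μ) be a sesquilinear map (linear in the first argument, conjugate-linear in the second) such that Φ(x,x) ≥ 0 almost everywhere for every x ∈ X. Then for all x₁, x₂ ∈ X one has ‖Φ(x₁,x₂)‖₂ ≤ ‖Φ(x₁,x₁)‖₂^{1/2} · ‖Φ(x₂,x₂)‖₂^{1/2}. -/
/-!
Expanding `0 ≤ Φ (x₁ + z • x₂) (x₁ + z • x₂)` shows that for each `z : ℂ`, almost every value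
`Φ(x₁,x₁)(t) + z̄ Φ(x₁,x₂)(t) + z Φ(x₂,x₁)(t) + |z|² Φ(x₂,x₂)(t)` is nonnegative. Running `z` through
a countable dense subset of `ℂ` and using continuity in `z`, this holds for all `z` off a single null
set, whence `|Φ(x₁,x₂)(t)|² ≤ Φ(x₁,x₁)(t) Φ(x₂,x₂)(t)` almost everywhere. Integrating and applying
Cauchy–Schwarz in `L²` gives `‖Φ(x₁,x₂)‖² ≤ ⟪Φ(x₁,x₁), Φ(x₂,x₂)⟫ ≤ ‖Φ(x₁,x₁)‖ ‖Φ(x₂,x₂)‖`.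
-/

open MeasureTheory
open scoped ComplexOrder ComplexConjugate InnerProductSpace

namespace Complex

theorem normSq_le_re_mul_re_of_forall_nonneg {a b c d : ℂ} (hc : 0 ≤ c)
    (h : ∀ z : ℂ, 0 ≤ a + conj z * b + z * d + z * conj z * c) :
    normSq b ≤ a.re * c.re := by
  obtain ⟨ha_re, ha_im⟩ := nonneg_iff.mp (by simpa only [map_zero, zero_mul, add_zero] using h 0)
  obtain ⟨hc_re, hc_im⟩ := nonneg_iff.mp hc
  -- `z = 1` and `z = I` force `d = conj b`; then `z = r * b` gives a real quadratic in `r`.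
  have hd_im : d.im = -b.im := by
    have := (nonneg_iff.mp (h 1)).2
    simp only [map_one, one_mul, mul_one, add_im, ← ha_im, zero_add, ← hc_im, add_zero] at this
    linarith
  have hd_re : d.re = b.re := by
    have := (nonneg_iff.mp (h I)).2
    simp only [conj_I, neg_mul, mul_neg, I_mul_I, neg_neg, one_mul, add_im, ← ha_im, neg_im,
      mul_im, I_re, zero_mul, I_im, zero_add, ← hc_im, add_zero] at this
    linarith
  have hquad : ∀ r : ℝ, 0 ≤ (normSq b * c.re) * (r * r) + 2 * normSq b * r + a.re := by
    intro r
    have := (nonneg_iff.mp (h (r * b))).1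
    simp only [map_mul, conj_ofReal, add_re, mul_re, ofReal_re, conj_re, ofReal_im, conj_im,
      mul_neg, zero_mul, neg_zero, sub_zero, mul_im, add_zero, neg_mul, sub_neg_eq_add, hd_re,
      hd_im] at this
    rw [normSq_apply]
    linear_combination this
  have hdiscrim := discrim_le_zero hquad
  rw [discrim] at hdiscrim
  rcases (normSq_nonneg b).eq_or_lt with hb | hb
  · rw [← hb]
    positivity
  · nlinarith

end Complex

namespace MeasureTheory

theorem ae_forall_of_isClosed {α Y : Type*} [MeasurableSpace α] {μ : Measure α}
    [TopologicalSpace Y] [TopologicalSpace.SeparableSpace Y] {p : α → Y → Prop}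
    (hclosed : ∀ t, IsClosed {y | p t y}) (h : ∀ y, ∀ᵐ t ∂μ, p t y) :
    ∀ᵐ t ∂μ, ∀ y, p t y := by
  obtain ⟨s, hs_countable, hs_dense⟩ := TopologicalSpace.exists_countable_dense Y
  filter_upwards [(ae_ball_iff hs_countable).mpr fun y _ => h y] with t ht y
  exact (hclosed t).closure_subset_iff.mpr ht (hs_dense y)

theorem L2.norm_sq_le_norm_mul_norm_of_ae_le {α 𝕜 E : Type*} [MeasurableSpace α]
    {μ : Measure α} [RCLike 𝕜] [NormedAddCommGroup E] [InnerProductSpace 𝕜 E]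
    {f g h : Lp E 2 μ} (hle : ∀ᵐ t ∂μ, ‖f t‖ ^ 2 ≤ RCLike.re (⟪g t, h t⟫_𝕜)) :
    ‖f‖ ^ 2 ≤ ‖g‖ * ‖h‖ :=
  calc ‖f‖ ^ 2 = RCLike.re (⟪f, f⟫_𝕜) := (inner_self_eq_norm_sq f).symm
    _ = ∫ t, ‖f t‖ ^ 2 ∂μ := by
      simp_rw [L2.inner_def, ← integral_re (L2.integrable_inner f f), inner_self_eq_norm_sq]
    _ ≤ ∫ t, RCLike.re (⟪g t, h t⟫_𝕜) ∂μ :=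
      integral_mono_ae ((L2.integrable_inner (𝕜 := 𝕜) f f).re.congr
        (ae_of_all _ fun t => inner_self_eq_norm_sq (f t))) (L2.integrable_inner g h).re hle
    _ = RCLike.re (⟪g, h⟫_𝕜) := by rw [L2.inner_def, integral_re (L2.integrable_inner g h)]
    _ ≤ ‖g‖ * ‖h‖ := re_inner_le_norm g h

end MeasureTheory

/-- Cauchy–Schwarz inequality for positive sesquilinear maps with values in `L²(Ω, μ)`. -/
theorem cauchy_schwarz_L2 {X Ω : Type*} [AddCommGroup X] [Module ℂ X]
    [MeasurableSpace Ω] (μ : Measure Ω)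
    (Φ : X → X → Lp ℂ 2 μ)
    (hadd₁ : ∀ x y z : X, Φ (x + y) z = Φ x z + Φ y z)
    (hsmul₁ : ∀ (c : ℂ) (x y : X), Φ (c • x) y = c • Φ x y)
    (hadd₂ : ∀ x y z : X, Φ x (y + z) = Φ x y + Φ x z)
    (hsmul₂ : ∀ (c : ℂ) (x y : X), Φ x (c • y) = (starRingEnd ℂ c) • Φ x y)
    (hpos : ∀ x : X, ∀ᵐ t ∂μ, 0 ≤ (Φ x x : Ω → ℂ) t) :
    ∀ x₁ x₂ : X, ‖Φ x₁ x₂‖ ≤ Real.sqrt ‖Φ x₁ x₁‖ * Real.sqrt ‖Φ x₂ x₂‖ := by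
  intro x₁ x₂
  have hexpand (z : ℂ) : Φ (x₁ + z • x₂) (x₁ + z • x₂) =
      Φ x₁ x₁ + conj z • Φ x₁ x₂ + z • Φ x₂ x₁ + (z * conj z) • Φ x₂ x₂ := by
    rw [hadd₁, hadd₂, hadd₂, hsmul₂, hsmul₁, hsmul₁, hsmul₂, smul_smul, ← add_assoc]
  have hquad (z : ℂ) : ∀ᵐ t ∂μ, 0 ≤ Φ x₁ x₁ t + conj z * Φ x₁ x₂ t + z * Φ x₂ x₁ t +
      z * conj z * Φ x₂ x₂ t := by
    filter_upwards [hpos (x₁ + z • x₂), Lp.coeFn_add (Φ x₁ x₁ + conj z • Φ x₁ x₂ + z • Φ x₂ x₁)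
      ((z * conj z) • Φ x₂ x₂), Lp.coeFn_add (Φ x₁ x₁ + conj z • Φ x₁ x₂) (z • Φ x₂ x₁),
      Lp.coeFn_add (Φ x₁ x₁) (conj z • Φ x₁ x₂), Lp.coeFn_smul (conj z) (Φ x₁ x₂),
      Lp.coeFn_smul z (Φ x₂ x₁), Lp.coeFn_smul (z * conj z) (Φ x₂ x₂)]
      with t ht h₁ h₂ h₃ h₄ h₅ h₆
    simpa only [hexpand, h₁, h₂, h₃, h₄, h₅, h₆, Pi.add_apply, Pi.smul_apply, smul_eq_mul] using ht
  have hall := ae_forall_of_isClosed (fun t => isClosed_le continuous_const (by fun_prop)) hquad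
  have hpointwise : ∀ᵐ t ∂μ, ‖Φ x₁ x₂ t‖ ^ 2 ≤ RCLike.re (⟪Φ x₁ x₁ t, Φ x₂ x₂ t⟫_ℂ) := by
    filter_upwards [hall, hpos x₁, hpos x₂] with t ht hA hC
    rw [← Complex.normSq_eq_norm_sq, RCLike.re_to_complex, RCLike.inner_apply, Complex.mul_re,
      Complex.conj_re, Complex.conj_im, ← hA.2]
    simpa [mul_comm] using Complex.normSq_le_re_mul_re_of_forall_nonneg hC ht
  rw [← Real.sqrt_mul (norm_nonneg _), ← Real.sqrt_sq (norm_nonneg (Φ x₁ x₂))]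
  exact Real.sqrt_le_sqrt (L2.norm_sq_le_norm_mul_norm_of_ae_le hpointwise)
end

section
/- Let X be a complex vector space, Ω a locally compact Hausdorff space, and M(Ω) the Banach space of complex Radon measures on Ω with the total variation norm. Let Φ : X × X → M(Ω) be a sesquilinear map such that Φ(x,x) is a positive measure for every x ∈ X. Then ‖Φ(x₁,x₂)‖ ≤ ‖Φ(x₁,x₁)‖^{1/2} · ‖Φ(x₂,x₂)‖^{1/2} for all x₁, x₂ ∈ X. -/
open MeasureTheory
open scoped ComplexOrder

/-- The total variation norm of a complex (vector) measure:
the supremum of `∑ i, |ν (E i)|` over finite families of pairwise disjoint measurable sets. -/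
noncomputable def totalVariationNorm {Ω : Type*} [MeasurableSpace Ω]
    (ν : VectorMeasure Ω ℂ) : ℝ :=
  sSup {r : ℝ | ∃ (n : ℕ) (E : Fin n → Set Ω), (∀ i, MeasurableSet (E i)) ∧
    Pairwise (Function.onFun Disjoint E) ∧ r = ∑ i, ‖ν (E i)‖}

/-! For each measurable `E`, `(x, y) ↦ Φ x y E` is a positive semidefinite sesquilinear form, so
`‖Φ x₁ x₂ E‖ ≤ √‖Φ x₁ x₁ E‖ * √‖Φ x₂ x₂ E‖`. Summing over a measurable partition and applying
Cauchy–Schwarz for finite sums bounds the variation sum of `Φ x₁ x₂` by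
`√(∑ ‖Φ x₁ x₁ (E i)‖) * √(∑ ‖Φ x₂ x₂ (E i)‖)`, and for a positive measure such a sum is at most the
total mass. -/

namespace LinearMap

variable {X : Type*} [AddCommGroup X] [Module ℂ X] (B : X →ₗ[ℂ] X →ₗ⋆[ℂ] ℂ)

theorem conj_apply_of_forall_im_apply_self_eq_zero (hB : ∀ x, (B x x).im = 0) (x y : X) :
    starRingEnd ℂ (B x y) = B y x := by
  have hxy := hB (x + y)
  have hxIy := hB (x + Complex.I • y)
  simp only [map_add, map_smul, map_smulₛₗ, add_apply, smul_apply, smul_eq_mul,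
    Complex.conj_I, Complex.add_re, Complex.add_im, Complex.mul_re, Complex.mul_im,
    Complex.I_re, Complex.I_im, Complex.neg_re, Complex.neg_im, hB x, hB y] at hxy hxIy
  apply Complex.ext <;> simp only [Complex.conj_re, Complex.conj_im] <;> linarith

theorem norm_apply_le_sqrt_mul_sqrt_of_nonneg (hB : ∀ x, 0 ≤ B x x) (x y : X) :
    ‖B x y‖ ≤ √‖B x x‖ * √‖B y y‖ := by
  have hconj := B.conj_apply_of_forall_im_apply_self_eq_zero
    fun z => (Complex.nonneg_iff.1 (hB z)).2.symm
  -- Mathlib's inner products are conjugate-linear in the first argument, hence the flip.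
  let _ : PreInnerProductSpace.Core ℂ X :=
    { inner x y := B y x
      conj_inner_symm := hconj
      re_inner_nonneg x := (Complex.nonneg_iff.1 (hB x)).1
      add_left x y z := by simp
      smul_left x y r := by simp }
  have hCS : ‖B x y‖ * ‖B y x‖ ≤ (B y y).re * (B x x).re :=
    InnerProductSpace.Core.inner_mul_inner_self_le (𝕜 := ℂ) y x
  rw [← hconj x y, Complex.norm_conj, Complex.re_eq_norm.2 (hB x),
    Complex.re_eq_norm.2 (hB y)] at hCS
  rw [← Real.sqrt_mul (norm_nonneg _)]
  exact Real.le_sqrt_of_sq_le (by linarith)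

end LinearMap

section

variable {Ω : Type*} [MeasurableSpace Ω] {ν : VectorMeasure Ω ℂ}

namespace MeasureTheory.VectorMeasure

theorem sum_norm_apply_le_norm_apply_univ_of_nonneg
    (hν : ∀ E, MeasurableSet E → 0 ≤ ν E) {n : ℕ} {E : Fin n → Set Ω}
    (hm : ∀ i, MeasurableSet (E i)) (hd : Pairwise (Function.onFun Disjoint E)) :
    ∑ i, ‖ν (E i)‖ ≤ ‖ν Set.univ‖ := by
  have hU : ∑ i, ν (E i) ≤ ν Set.univ := by
    rw [← of_add_of_sdiff (MeasurableSet.iUnion hm) MeasurableSet.univ (Set.subset_univ _),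
      of_disjoint_iUnion hm hd, tsum_fintype]
    exact le_add_of_nonneg_right (hν _ (MeasurableSet.univ.diff (.iUnion hm)))
  rw [← Complex.real_le_real]
  push_cast
  rwa [Finset.sum_congr rfl fun i _ => Complex.norm_of_nonneg' (hν _ (hm i)),
    Complex.norm_of_nonneg' (hν _ .univ)]

end MeasureTheory.VectorMeasure

theorem sum_norm_le_totalVariationNorm_of_nonneg
    (hν : ∀ E, MeasurableSet E → 0 ≤ ν E) {n : ℕ} {E : Fin n → Set Ω}
    (hm : ∀ i, MeasurableSet (E i)) (hd : Pairwise (Function.onFun Disjoint E)) :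
    ∑ i, ‖ν (E i)‖ ≤ totalVariationNorm ν := by
  refine le_csSup ⟨‖ν Set.univ‖, ?_⟩ ⟨n, E, hm, hd, rfl⟩
  rintro r ⟨m, F, hF, hFd, rfl⟩
  exact VectorMeasure.sum_norm_apply_le_norm_apply_univ_of_nonneg hν hF hFd

end

theorem cauchy_schwarz_measures_general {X Ω : Type*} [AddCommGroup X] [Module ℂ X]
    [MeasurableSpace Ω]
    (Φ : X → X → VectorMeasure Ω ℂ)
    (hadd₁ : ∀ x y z : X, Φ (x + y) z = Φ x z + Φ y z)
    (hsmul₁ : ∀ (c : ℂ) (x y : X), Φ (c • x) y = c • Φ x y)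
    (hadd₂ : ∀ x y z : X, Φ x (y + z) = Φ x y + Φ x z)
    (hsmul₂ : ∀ (c : ℂ) (x y : X), Φ x (c • y) = (starRingEnd ℂ c) • Φ x y)
    (hpos : ∀ (x : X) (E : Set Ω), MeasurableSet E → 0 ≤ Φ x x E) :
    ∀ x₁ x₂ : X, totalVariationNorm (Φ x₁ x₂) ≤
      Real.sqrt (totalVariationNorm (Φ x₁ x₁)) * Real.sqrt (totalVariationNorm (Φ x₂ x₂)) := by
  intro x₁ x₂
  have hCS (E : Set Ω) (hE : MeasurableSet E) :
      ‖Φ x₁ x₂ E‖ ≤ √‖Φ x₁ x₁ E‖ * √‖Φ x₂ x₂ E‖ :=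
    (LinearMap.mk₂'ₛₗ (RingHom.id ℂ) (starRingEnd ℂ) (fun x y => Φ x y E)
      (by simp [hadd₁]) (by simp [hsmul₁]) (by simp [hadd₂]) (by simp [hsmul₂])
      ).norm_apply_le_sqrt_mul_sqrt_of_nonneg (fun x => hpos x E hE) x₁ x₂
  refine Real.sSup_le ?_ (by positivity)
  rintro r ⟨n, E, hm, hd, rfl⟩
  calc ∑ i, ‖Φ x₁ x₂ (E i)‖ ≤ ∑ i, √‖Φ x₁ x₁ (E i)‖ * √‖Φ x₂ x₂ (E i)‖ :=
        Finset.sum_le_sum fun i _ => hCS (E i) (hm i)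
    _ ≤ √(∑ i, ‖Φ x₁ x₁ (E i)‖) * √(∑ i, ‖Φ x₂ x₂ (E i)‖) :=
        Real.sum_sqrt_mul_sqrt_le _ (fun _ => norm_nonneg _) (fun _ => norm_nonneg _)
    _ ≤ √(totalVariationNorm (Φ x₁ x₁)) * √(totalVariationNorm (Φ x₂ x₂)) := by
        gcongr <;> exact sum_norm_le_totalVariationNorm_of_nonneg (hpos _) hm hd

/-- Cauchy–Schwarz inequality for positive sesquilinear maps with values in the space `M(Ω)`
of complex Radon measures on a locally compact Hausdorff space, with the total variation norm. -/
theorem cauchy_schwarz_measures {X Ω : Type*} [AddCommGroup X] [Module ℂ X]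
    [TopologicalSpace Ω] [LocallyCompactSpace Ω] [T2Space Ω]
    [MeasurableSpace Ω] [BorelSpace Ω]
    (Φ : X → X → VectorMeasure Ω ℂ)
    (hadd₁ : ∀ x y z : X, Φ (x + y) z = Φ x z + Φ y z)
    (hsmul₁ : ∀ (c : ℂ) (x y : X), Φ (c • x) y = c • Φ x y)
    (hadd₂ : ∀ x y z : X, Φ x (y + z) = Φ x y + Φ x z)
    (hsmul₂ : ∀ (c : ℂ) (x y : X), Φ x (c • y) = (starRingEnd ℂ c) • Φ x y)
    (hpos : ∀ (x : X) (E : Set Ω), MeasurableSet E → 0 ≤ Φ x x E) :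
    ∀ x₁ x₂ : X, totalVariationNorm (Φ x₁ x₂) ≤
      Real.sqrt (totalVariationNorm (Φ x₁ x₁)) * Real.sqrt (totalVariationNorm (Φ x₂ x₂)) :=
  cauchy_schwarz_measures_general Φ hadd₁ hsmul₁ hadd₂ hsmul₂ hpos
end

section
/- Let X be a complex vector space and μ a measure on a measurable space Ω. Let Φ : X × X → L¹(Ω, μ) be a sesquilinear map such that Φ(x,x) ≥ 0 almost everywhere for every x ∈ X. Then ‖Φ(x₁,x₂)‖₁ ≤ ‖Φ(x₁,x₁)‖₁^{1/2} · ‖Φ(x₂,x₂)‖₁^{1/2} for all x₁, x₂ ∈ X. -/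
open MeasureTheory Matrix
open scoped ComplexOrder ENNReal

/-!
Fix `x₁, x₂`. For every `v ∈ ℂ²`, positivity of `Φ(v₁x₁ + v₂x₂, v₁x₁ + v₂x₂)` says that, almost
everywhere, the pointwise Gram matrix `(Φ(xⱼ, xᵢ)(t))ᵢⱼ` is nonnegative on `v`. Since `ℂ²` is
separable and nonnegativity is a closed condition, a single null set serves all `v`, so almost every
pointwise Gram matrix is positive semidefinite (over `ℂ` this includes being Hermitian). Its
determinant then gives `|Φ(x₁, x₂)(t)| ≤ |Φ(x₁, x₁)(t)|^½ |Φ(x₂, x₂)(t)|^½` a.e., and integrating with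
Hölder's inequality for the exponents `½ + ½ = 1` gives the claim.
-/

theorem MeasureTheory.ae_forall_of_isClosed_s4 {Ω V : Type*} [MeasurableSpace Ω] {μ : Measure Ω}
    [TopologicalSpace V] [TopologicalSpace.SeparableSpace V] {p : Ω → V → Prop}
    (hp : ∀ t, IsClosed {v | p t v}) (h : ∀ v, ∀ᵐ t ∂μ, p t v) :
    ∀ᵐ t ∂μ, ∀ v, p t v := by
  obtain ⟨D, hD_countable, hD_dense⟩ := TopologicalSpace.exists_countable_dense V
  filter_upwards [(ae_ball_iff hD_countable).2 fun v _ ↦ h v] with t ht v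
  exact closure_minimal ht (hp t) (hD_dense v)

theorem Matrix.posSemidef_of_dotProduct_mulVec_nonneg_complex {n : Type*} [Fintype n]
    {A : Matrix n n ℂ} (h : ∀ v, 0 ≤ star v ⬝ᵥ (A *ᵥ v)) : A.PosSemidef := by
  classical
  rw [← isPositive_toEuclideanLin_iff, LinearMap.isPositive_iff_complex]
  intro x
  have hx := h x.ofLp
  have hreal := (IsSelfAdjoint.of_nonneg hx).star_eq
  rw [EuclideanSpace.inner_eq_star_dotProduct, ofLp_toLpLin, toLin'_apply, ← star_star x.ofLp,
    star_dotProduct_star, dotProduct_comm, star_star, hreal]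
  exact ⟨Complex.conj_eq_iff_re.mp hreal, (Complex.nonneg_iff.mp hx).1⟩

theorem Matrix.PosSemidef.norm_apply_le_sqrt_mul_sqrt {ι 𝕜 : Type*} [RCLike 𝕜]
    {A : Matrix ι ι 𝕜} (hA : A.PosSemidef) (i j : ι) : ‖A i j‖ ≤ √‖A i i‖ * √‖A j j‖ := by
  have hdet := (hA.submatrix ![i, j]).det_nonneg
  rw [det_fin_two] at hdet
  simp only [submatrix_apply, cons_val_zero, cons_val_one, sub_nonneg] at hdet
  have hii : (‖A i i‖ : 𝕜) = A i i := RCLike.norm_of_nonneg' hA.diag_nonneg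
  have hjj : (‖A j j‖ : 𝕜) = A j j := RCLike.norm_of_nonneg' hA.diag_nonneg
  rw [← hA.isHermitian.apply j i, RCLike.star_def, RCLike.mul_conj, ← hii, ← hjj] at hdet
  have hsq : ‖A i j‖ ^ 2 ≤ ‖A i i‖ * ‖A j j‖ := by exact_mod_cast hdet
  rw [← Real.sqrt_mul (norm_nonneg _)]
  exact Real.le_sqrt_of_sq_le hsq

theorem MeasureTheory.L1.norm_le_sqrt_mul_sqrt_of_ae_le {Ω E F G : Type*} [MeasurableSpace Ω]
    {μ : Measure Ω} [NormedAddCommGroup E] [NormedAddCommGroup F] [NormedAddCommGroup G]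
    {f : Lp E 1 μ} {g : Lp F 1 μ} {h : Lp G 1 μ}
    (hfgh : ∀ᵐ t ∂μ, ‖f t‖ ≤ √‖g t‖ * √‖h t‖) : ‖f‖ ≤ √‖g‖ * √‖h‖ := by
  have hpointwise : ∀ᵐ t ∂μ, ‖f t‖ₑ ≤ ‖g t‖ₑ ^ (1 / 2 : ℝ) * ‖h t‖ₑ ^ (1 / 2 : ℝ) := by
    filter_upwards [hfgh] with t ht
    rw [← ofReal_norm, ← ofReal_norm, ← ofReal_norm,
      ENNReal.ofReal_rpow_of_nonneg (norm_nonneg _) (by norm_num),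
      ENNReal.ofReal_rpow_of_nonneg (norm_nonneg _) (by norm_num),
      ← ENNReal.ofReal_mul (by positivity), ← Real.sqrt_eq_rpow, ← Real.sqrt_eq_rpow]
    exact ENNReal.ofReal_le_ofReal ht
  have hholder : ∫⁻ t, ‖f t‖ₑ ∂μ
      ≤ (∫⁻ t, ‖g t‖ₑ ∂μ) ^ (1 / 2 : ℝ) * (∫⁻ t, ‖h t‖ₑ ∂μ) ^ (1 / 2 : ℝ) :=
    (lintegral_mono_ae hpointwise).trans <|
      ENNReal.lintegral_mul_norm_pow_le (Lp.aestronglyMeasurable g).enorm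
        (Lp.aestronglyMeasurable h).enorm (by norm_num) (by norm_num) (by norm_num)
  have hg := (L1.integrable_coeFn g).2.ne
  have hh := (L1.integrable_coeFn h).2.ne
  rw [L1.norm_def, L1.norm_def, L1.norm_def, Real.sqrt_eq_rpow, Real.sqrt_eq_rpow,
    ENNReal.toReal_rpow, ENNReal.toReal_rpow, ← ENNReal.toReal_mul]
  exact ENNReal.toReal_mono (by finiteness) hholder

section PointwiseGram

variable {𝕜 X Ω ι : Type*} [RCLike 𝕜] [AddCommGroup X] [Module 𝕜 X] [MeasurableSpace Ω]
  {μ : Measure Ω} {p : ℝ≥0∞}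

/-- Entry `(i, j)` is `B (x j) (x i)`: this matches `Matrix.gram`, since `B` is linear in its first
variable while Mathlib's inner product is linear in its second. -/
noncomputable def pointwiseGram (B : X →ₗ[𝕜] X →ₗ⋆[𝕜] Lp 𝕜 p μ) (x : ι → X) (t : Ω) :
    Matrix ι ι 𝕜 :=
  Matrix.of fun i j ↦ B (x j) (x i) t

theorem coeFn_apply_sum_smul_ae_eq [Fintype ι] (B : X →ₗ[𝕜] X →ₗ⋆[𝕜] Lp 𝕜 p μ) (x : ι → X)
    (v : ι → 𝕜) :
    ⇑(B (∑ j, v j • x j) (∑ j, v j • x j))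
      =ᵐ[μ] fun t ↦ star v ⬝ᵥ (pointwiseGram B x t *ᵥ v) := by
  have hexpand : B (∑ j, v j • x j) (∑ j, v j • x j)
      = ∑ q : ι × ι, (starRingEnd 𝕜 (v q.1) * v q.2) • B (x q.2) (x q.1) := by
    simp only [map_sum, map_smul, map_smulₛₗ, LinearMap.sum_apply, LinearMap.smul_apply,
      Finset.smul_sum, smul_smul, Fintype.sum_prod_type]
  rw [hexpand]
  filter_upwards [Lp.coeFn_fun_finsetSum Finset.univ
      fun q : ι × ι ↦ (starRingEnd 𝕜 (v q.1) * v q.2) • B (x q.2) (x q.1),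
    ae_all_iff.2 fun q : ι × ι ↦ Lp.coeFn_smul (starRingEnd 𝕜 (v q.1) * v q.2) (B (x q.2) (x q.1))]
    with t hsum hsmul
  rw [hsum]
  simp only [hsmul, Pi.smul_apply, smul_eq_mul, dotProduct, mulVec, pointwiseGram, of_apply,
    Fintype.sum_prod_type, Finset.mul_sum, Pi.star_apply, RCLike.star_def]
  ac_rfl

theorem ae_forall_star_dotProduct_pointwiseGram_mulVec_nonneg [Fintype ι]
    {B : X →ₗ[𝕜] X →ₗ⋆[𝕜] Lp 𝕜 p μ} (hB : ∀ y, ∀ᵐ t ∂μ, 0 ≤ B y y t) (x : ι → X) :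
    ∀ᵐ t ∂μ, ∀ v, 0 ≤ star v ⬝ᵥ (pointwiseGram B x t *ᵥ v) := by
  refine ae_forall_of_isClosed_s4 (fun _ ↦ isClosed_le continuous_const (by fun_prop)) fun v ↦ ?_
  filter_upwards [hB (∑ j, v j • x j), coeFn_apply_sum_smul_ae_eq B x v] with t hpos heq
  rwa [heq] at hpos

end PointwiseGram

theorem ae_posSemidef_pointwiseGram {X Ω ι : Type*} [AddCommGroup X] [Module ℂ X]
    [MeasurableSpace Ω] {μ : Measure Ω} {p : ℝ≥0∞} [Fintype ι]
    {B : X →ₗ[ℂ] X →ₗ⋆[ℂ] Lp ℂ p μ} (hB : ∀ y, ∀ᵐ t ∂μ, 0 ≤ B y y t) (x : ι → X) :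
    ∀ᵐ t ∂μ, (pointwiseGram B x t).PosSemidef :=
  (ae_forall_star_dotProduct_pointwiseGram_mulVec_nonneg hB x).mono fun _ ↦
    posSemidef_of_dotProduct_mulVec_nonneg_complex

/-- Cauchy–Schwarz inequality for positive sesquilinear maps with values in `L¹(Ω, μ)`. -/
theorem cauchy_schwarz_L1 {X Ω : Type*} [AddCommGroup X] [Module ℂ X]
    [MeasurableSpace Ω] (μ : Measure Ω)
    (Φ : X → X → Lp ℂ 1 μ)
    (hadd₁ : ∀ x y z : X, Φ (x + y) z = Φ x z + Φ y z)
    (hsmul₁ : ∀ (c : ℂ) (x y : X), Φ (c • x) y = c • Φ x y)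
    (hadd₂ : ∀ x y z : X, Φ x (y + z) = Φ x y + Φ x z)
    (hsmul₂ : ∀ (c : ℂ) (x y : X), Φ x (c • y) = (starRingEnd ℂ c) • Φ x y)
    (hpos : ∀ x : X, ∀ᵐ t ∂μ, 0 ≤ (Φ x x : Ω → ℂ) t) :
    ∀ x₁ x₂ : X, ‖Φ x₁ x₂‖ ≤ Real.sqrt ‖Φ x₁ x₁‖ * Real.sqrt ‖Φ x₂ x₂‖ := by
  intro x₁ x₂
  let B : X →ₗ[ℂ] X →ₗ⋆[ℂ] Lp ℂ 1 μ :=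
    LinearMap.mk₂'ₛₗ (RingHom.id ℂ) (starRingEnd ℂ) Φ hadd₁ hsmul₁ hadd₂ hsmul₂
  refine L1.norm_le_sqrt_mul_sqrt_of_ae_le ?_
  filter_upwards [ae_posSemidef_pointwiseGram (B := B) hpos ![x₁, x₂]] with t hgram
  simpa [pointwiseGram, B, mul_comm] using hgram.norm_apply_le_sqrt_mul_sqrt 1 0
end

section
/- Let X be a complex vector space and Y an ordered Banach space with closed positive cone and order-preserving norm (y₁ ≤ y₂ with y₁, y₂ ≥ 0 implies ‖y₁‖ ≤ ‖y₂‖), such that every Y-valued positive sesquilinear map satisfies the Cauchy–Schwarz inequality ‖Φ(x₁,x₂)‖ ≤ ‖Φ(x₁,x₁)‖^{1/2}‖Φ(x₂,x₂)‖^{1/2}. If {Φ_n} is a sequence of positive sesquilinear maps Φ_n : X × X → Y and {x_n}, {x̃_n} sequences in X such that Σ_n Φ_n(x_n,x_n) and Σ_n Φ_n(x̃_n,x̃_n) converge in Y, then Σ_n Φ_n(x_n,x̃_n) converges and ‖Σ_n Φ_n(x_n,x̃_n)‖ ≤ ‖Σ_n Φ_n(x_n,x_n)‖^{1/2} · ‖Σ_n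 Φ_n(x̃_n,x̃_n)‖^{1/2}. -/
/-! On every finite set `s` of indices, `(u, v) ↦ ∑ i ∈ s, Φ i (u i) (v i)` is a positive
sesquilinear map on `X^s`, so the assumed Cauchy–Schwarz inequality bounds each finite partial
sum of the cross terms. On a tail `t` both factors `‖∑ i ∈ t, Φ i (x i) (x i)‖` and
`‖∑ i ∈ t, Φ i (x' i) (x' i)‖` are small, so the cross terms satisfy the Cauchy criterion; the
inequality then passes to the limit by continuity of the norm and of the square root. -/

open Finset

structure IsPosSesquilinear {X Y : Type*} [AddCommGroup X] [Module ℂ X] [AddCommGroup Y]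
    [Module ℂ Y] (K : AddSubmonoid Y) (Φ : X → X → Y) : Prop where
  add_left : ∀ x y z, Φ (x + y) z = Φ x z + Φ y z
  smul_left : ∀ (c : ℂ) x y, Φ (c • x) y = c • Φ x y
  add_right : ∀ x y z, Φ x (y + z) = Φ x y + Φ x z
  smul_right : ∀ (c : ℂ) x y, Φ x (c • y) = starRingEnd ℂ c • Φ x y
  apply_self_mem : ∀ x, Φ x x ∈ K

namespace IsPosSesquilinear

variable {X Y ι : Type*} [AddCommGroup X] [Module ℂ X] [AddCommGroup Y] [Module ℂ Y]
  {K : AddSubmonoid Y}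

theorem pi [Fintype ι] {Φ : ι → X → X → Y} (hΦ : ∀ i, IsPosSesquilinear K (Φ i)) :
    IsPosSesquilinear K fun (u v : ι → X) => ∑ i, Φ i (u i) (v i) where
  add_left u v w := by simp only [Pi.add_apply, (hΦ _).add_left, sum_add_distrib]
  smul_left c u v := by simp only [Pi.smul_apply, (hΦ _).smul_left, smul_sum]
  add_right u v w := by simp only [Pi.add_apply, (hΦ _).add_right, sum_add_distrib]
  smul_right c u v := by simp only [Pi.smul_apply, (hΦ _).smul_right, smul_sum]
  apply_self_mem u := K.sum_mem fun i _ => (hΦ i).apply_self_mem (u i)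

end IsPosSesquilinear

theorem norm_sum_le_sqrt_mul_sqrt_of_isPosSesquilinear {X Y ι : Type*} [AddCommGroup X]
    [Module ℂ X] [NormedAddCommGroup Y] [NormedSpace ℂ Y] (K : AddSubmonoid Y)
    (hCS : ∀ (N : ℕ) (Ψ : (Fin N → X) → (Fin N → X) → Y), IsPosSesquilinear K Ψ →
      ∀ u v, ‖Ψ u v‖ ≤ √‖Ψ u u‖ * √‖Ψ v v‖)
    {Φ : ι → X → X → Y} (hΦ : ∀ i, IsPosSesquilinear K (Φ i)) (s : Finset ι) (x x' : ι → X) :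
    ‖∑ i ∈ s, Φ i (x i) (x' i)‖ ≤
      √‖∑ i ∈ s, Φ i (x i) (x i)‖ * √‖∑ i ∈ s, Φ i (x' i) (x' i)‖ := by
  set e := s.equivFin.symm
  have reindex (a b : ι → X) :
      ∑ i ∈ s, Φ i (a i) (b i) = ∑ j, Φ (e j) (a (e j)) (b (e j)) := by
    rw [← sum_coe_sort, ← e.sum_comp]
  simpa only [reindex] using hCS _ _ (IsPosSesquilinear.pi fun j => hΦ (e j))
    (fun j => x (e j)) (fun j => x' (e j))

section Limit

variable {ι E F : Type*} [NormedAddCommGroup E] [NormedAddCommGroup F]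
  {a : ι → E} {b c : ι → F}

theorem summable_of_norm_sum_le_sqrt_mul_sqrt [CompleteSpace E] (hb : Summable b)
    (hc : Summable c)
    (h : ∀ s : Finset ι, ‖∑ i ∈ s, a i‖ ≤ √‖∑ i ∈ s, b i‖ * √‖∑ i ∈ s, c i‖) : Summable a := by
  classical
  refine summable_iff_vanishing_norm.2 fun ε hε => ?_
  obtain ⟨sb, hsb⟩ := cauchySeq_finset_iff_vanishing_norm.1 hb.hasSum.cauchySeq ε hε
  obtain ⟨sc, hsc⟩ := cauchySeq_finset_iff_vanishing_norm.1 hc.hasSum.cauchySeq ε hε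
  refine ⟨sb ∪ sc, fun t ht => ?_⟩
  rw [disjoint_union_right] at ht
  calc ‖∑ i ∈ t, a i‖ ≤ √‖∑ i ∈ t, b i‖ * √‖∑ i ∈ t, c i‖ := h t
    _ < √ε * √ε := mul_lt_mul'' (Real.sqrt_lt_sqrt (norm_nonneg _) (hsb t ht.1))
        (Real.sqrt_lt_sqrt (norm_nonneg _) (hsc t ht.2)) (Real.sqrt_nonneg _)
        (Real.sqrt_nonneg _)
    _ = ε := Real.mul_self_sqrt hε.le

theorem norm_tsum_le_sqrt_mul_sqrt (ha : Summable a) (hb : Summable b) (hc : Summable c)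
    (h : ∀ s : Finset ι, ‖∑ i ∈ s, a i‖ ≤ √‖∑ i ∈ s, b i‖ * √‖∑ i ∈ s, c i‖) :
    ‖∑' i, a i‖ ≤ √‖∑' i, b i‖ * √‖∑' i, c i‖ :=
  le_of_tendsto_of_tendsto' ha.hasSum.norm (hb.hasSum.norm.sqrt.mul hc.hasSum.norm.sqrt) h

end Limit

theorem cauchy_schwarz_infinite_sums_general {X Y : Type*} [AddCommGroup X] [Module ℂ X]
    [NormedAddCommGroup Y] [NormedSpace ℂ Y] [CompleteSpace Y]
    (K : Set Y) (hK0 : (0 : Y) ∈ K)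
    (hKadd : ∀ y₁ y₂, y₁ ∈ K → y₂ ∈ K → y₁ + y₂ ∈ K)
    (hCS : ∀ (N : ℕ) (Ψ : (Fin N → X) → (Fin N → X) → Y),
      (∀ u v w, Ψ (u + v) w = Ψ u w + Ψ v w) →
      (∀ (c : ℂ) u v, Ψ (c • u) v = c • Ψ u v) →
      (∀ u v w, Ψ u (v + w) = Ψ u v + Ψ u w) →
      (∀ (c : ℂ) u v, Ψ u (c • v) = (starRingEnd ℂ c) • Ψ u v) →
      (∀ u, Ψ u u ∈ K) →
      ∀ u v, ‖Ψ u v‖ ≤ Real.sqrt ‖Ψ u u‖ * Real.sqrt ‖Ψ v v‖)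
    (Φ : ℕ → X → X → Y)
    (hadd₁ : ∀ n (x y z : X), Φ n (x + y) z = Φ n x z + Φ n y z)
    (hsmul₁ : ∀ n (c : ℂ) (x y : X), Φ n (c • x) y = c • Φ n x y)
    (hadd₂ : ∀ n (x y z : X), Φ n x (y + z) = Φ n x y + Φ n x z)
    (hsmul₂ : ∀ n (c : ℂ) (x y : X), Φ n x (c • y) = (starRingEnd ℂ c) • Φ n x y)
    (hpos : ∀ n (x : X), Φ n x x ∈ K)
    (x x' : ℕ → X)
    (hconv : Summable fun n => Φ n (x n) (x n))
    (hconv' : Summable fun n => Φ n (x' n) (x' n)) :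
    Summable (fun n => Φ n (x n) (x' n)) ∧
    ‖∑' n, Φ n (x n) (x' n)‖ ≤
      Real.sqrt ‖∑' n, Φ n (x n) (x n)‖ * Real.sqrt ‖∑' n, Φ n (x' n) (x' n)‖ := by
  let cone : AddSubmonoid Y := ⟨⟨K, hKadd _ _⟩, hK0⟩
  have hΦ (n : ℕ) : IsPosSesquilinear cone (Φ n) :=
    ⟨hadd₁ n, hsmul₁ n, hadd₂ n, hsmul₂ n, hpos n⟩
  have partial_sums (s : Finset ℕ) := norm_sum_le_sqrt_mul_sqrt_of_isPosSesquilinear cone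
    (fun N Ψ hΨ => hCS N Ψ hΨ.add_left hΨ.smul_left hΨ.add_right hΨ.smul_right
      hΨ.apply_self_mem) hΦ s x x'
  have summable := summable_of_norm_sum_le_sqrt_mul_sqrt hconv hconv' partial_sums
  exact ⟨summable, norm_tsum_le_sqrt_mul_sqrt summable hconv hconv' partial_sums⟩

/-- Cauchy–Schwarz inequality for infinite sums of positive sesquilinear maps with values in
an ordered Banach space `Y` with closed positive cone `K` and order-preserving norm, under the
assumption that every `Y`-valued positive sesquilinear map satisfies the Cauchy–Schwarz
inequality. -/
theorem cauchy_schwarz_infinite_sums {X Y : Type*} [AddCommGroup X] [Module ℂ X]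
    [NormedAddCommGroup Y] [NormedSpace ℂ Y] [CompleteSpace Y]
    (K : Set Y) (hKclosed : IsClosed K) (hK0 : (0 : Y) ∈ K)
    (hKadd : ∀ y₁ y₂, y₁ ∈ K → y₂ ∈ K → y₁ + y₂ ∈ K)
    (hKsmul : ∀ (r : ℝ) (y : Y), 0 ≤ r → y ∈ K → r • y ∈ K)
    (hKpointed : ∀ y, y ∈ K → -y ∈ K → y = 0)
    (hmono : ∀ y₁ y₂, y₁ ∈ K → y₂ - y₁ ∈ K → ‖y₁‖ ≤ ‖y₂‖)
    (hCS : ∀ (N : ℕ) (Ψ : (Fin N → X) → (Fin N → X) → Y),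
      (∀ u v w, Ψ (u + v) w = Ψ u w + Ψ v w) →
      (∀ (c : ℂ) u v, Ψ (c • u) v = c • Ψ u v) →
      (∀ u v w, Ψ u (v + w) = Ψ u v + Ψ u w) →
      (∀ (c : ℂ) u v, Ψ u (c • v) = (starRingEnd ℂ c) • Ψ u v) →
      (∀ u, Ψ u u ∈ K) →
      ∀ u v, ‖Ψ u v‖ ≤ Real.sqrt ‖Ψ u u‖ * Real.sqrt ‖Ψ v v‖)
    (Φ : ℕ → X → X → Y)
    (hadd₁ : ∀ n (x y z : X), Φ n (x + y) z = Φ n x z + Φ n y z)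
    (hsmul₁ : ∀ n (c : ℂ) (x y : X), Φ n (c • x) y = c • Φ n x y)
    (hadd₂ : ∀ n (x y z : X), Φ n x (y + z) = Φ n x y + Φ n x z)
    (hsmul₂ : ∀ n (c : ℂ) (x y : X), Φ n x (c • y) = (starRingEnd ℂ c) • Φ n x y)
    (hpos : ∀ n (x : X), Φ n x x ∈ K)
    (x x' : ℕ → X)
    (hconv : Summable fun n => Φ n (x n) (x n))
    (hconv' : Summable fun n => Φ n (x' n) (x' n)) :
    Summable (fun n => Φ n (x n) (x' n)) ∧
    ‖∑' n, Φ n (x n) (x' n)‖ ≤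
      Real.sqrt ‖∑' n, Φ n (x n) (x n)‖ * Real.sqrt ‖∑' n, Φ n (x' n) (x' n)‖ :=
  cauchy_schwarz_infinite_sums_general K hK0 hKadd hCS Φ hadd₁ hsmul₁ hadd₂ hsmul₂ hpos x x' hconv
    hconv'
end

section
/- Let X be a Banach space, Γ : X × X → X a bounded sesquilinear map, (A, A₀) a unital normed quasi *-algebra, and Y an ordered Banach space for which Cauchy–Schwarz holds for positive sesquilinear maps. Suppose Φ : A × A → B(X, Y) is a bounded left-invariant sesquilinear map which is completely positive with respect to Γ, and suppose the unit ball B₁ of X satisfies Γ(B₁ × B₁) = B₁. Then for all a, b ∈ A: ‖Φ(a,b)‖ ≤ ‖Φ(a,a)‖^{1/2} · ‖Φ(b,b)‖^{1/2} (operator norms in B(X,Y)). -/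
/-!
`Φ` and `Γ` combine into the sesquilinear map `Ψ (a ⊗ x) (b ⊗ y) = Φ a b (Γ x y)` on `A ⊗ X`;
complete positivity of `Φ` with respect to `Γ` says precisely that `Ψ u u` is positive for every
`u`, so Cauchy–Schwarz holds for `Ψ`. Since `Γ` maps `B₁ × B₁` onto `B₁`, every unit vector is
some `Γ x₁ x₂` with `Γ x₁ x₁, Γ x₂ x₂ ∈ B₁`, and the pointwise inequality passes to operator norms.
-/

open scoped TensorProduct

namespace TensorProduct

variable {R A Z X Y : Type*} [CommSemiring R] [StarRing R]
  [AddCommMonoid A] [Module R A] [AddCommMonoid Z] [Module R Z]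
  [AddCommMonoid X] [Module R X] [AddCommMonoid Y] [Module R Y]
  (φ : A →ₗ[R] A →ₗ⋆[R] X →ₗ[R] Y) (γ : Z →ₗ[R] Z →ₗ⋆[R] X)

noncomputable def sesqTensor : A ⊗[R] Z →ₗ[R] A ⊗[R] Z →ₗ⋆[R] Y :=
  lift <| LinearMap.mk₂ R
    (fun a z => lift <| LinearMap.mk₂'ₛₗ _ _ (fun b w => φ a b (γ z w))
      (by simp) (by simp) (by simp) (by simp))
    (fun a a' z => ext' fun b w => by simp)
    (fun c a z => ext' fun b w => by simp)
    (fun a z z' => ext' fun b w => by simp)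
    (fun c a z => ext' fun b w => by simp)

@[simp]
theorem sesqTensor_tmul (a b : A) (z w : Z) :
    sesqTensor φ γ (a ⊗ₜ z) (b ⊗ₜ w) = φ a b (γ z w) := rfl

theorem sesqTensor_sum_tmul_self {n : ℕ} (a : Fin n → A) (z : Fin n → Z) :
    sesqTensor φ γ (∑ i, a i ⊗ₜ z i) (∑ j, a j ⊗ₜ z j) =
      ∑ i, ∑ j, φ (a i) (a j) (γ (z i) (z j)) := by
  simp only [map_sum, LinearMap.sum_apply, sesqTensor_tmul]
  exact Finset.sum_comm

theorem sesqTensor_self_mem {K : Set Y} (hK : ∀ (n : ℕ) (a : Fin n → A) (z : Fin n → Z),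
      ∑ i, ∑ j, φ (a i) (a j) (γ (z i) (z j)) ∈ K) (u : A ⊗[R] Z) :
    sesqTensor φ γ u u ∈ K := by
  obtain ⟨n, a, z, rfl⟩ := exists_sum_tmul_eq u
  rw [sesqTensor_sum_tmul_self]
  exact hK n a z

end TensorProduct

namespace ContinuousLinearMap

open Metric Set

theorem opNorm_le_sqrt_mul_sqrt_of_image2_closedBall {𝕜 X Y : Type*} [RCLike 𝕜]
    [NormedAddCommGroup X] [NormedSpace 𝕜 X] [NormedAddCommGroup Y] [NormedSpace 𝕜 Y]
    {Γ : X → X → X} (hΓ : image2 Γ (closedBall 0 1) (closedBall 0 1) = closedBall 0 1)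
    {T P Q : X →L[𝕜] Y}
    (hT : ∀ x₁ x₂, ‖T (Γ x₁ x₂)‖ ≤ √‖P (Γ x₁ x₁)‖ * √‖Q (Γ x₂ x₂)‖) :
    ‖T‖ ≤ √‖P‖ * √‖Q‖ := by
  have hdiag : ∀ {x}, x ∈ closedBall (0 : X) 1 → ‖Γ x x‖ ≤ 1 := fun hx =>
    mem_closedBall_zero_iff.1 (hΓ ▸ mem_image2_of_mem hx hx)
  refine opNorm_le_of_unit_norm (by positivity) fun x hx => ?_
  obtain ⟨x₁, hx₁, x₂, hx₂, rfl⟩ : x ∈ image2 Γ (closedBall 0 1) (closedBall 0 1) :=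
    hΓ.symm ▸ mem_closedBall_zero_iff.2 hx.le
  calc ‖T (Γ x₁ x₂)‖ ≤ √‖P (Γ x₁ x₁)‖ * √‖Q (Γ x₂ x₂)‖ := hT x₁ x₂
    _ ≤ √‖P‖ * √‖Q‖ := by
      gcongr
      · exact P.unit_le_opNorm _ (hdiag hx₁)
      · exact Q.unit_le_opNorm _ (hdiag hx₂)

end ContinuousLinearMap

theorem operator_norm_cauchy_schwarz_general {A X Y : Type*}
    [NormedRing A] [NormedAlgebra ℂ A]
    [NormedAddCommGroup X] [NormedSpace ℂ X]
    [NormedAddCommGroup Y] [NormedSpace ℂ Y]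
    (K : Set Y)
    -- Cauchy–Schwarz holds for `Y`-valued positive sesquilinear maps
    (hCS : ∀ (Ψ : (A ⊗[ℂ] X) → (A ⊗[ℂ] X) → Y),
      (∀ u v w, Ψ (u + v) w = Ψ u w + Ψ v w) →
      (∀ (c : ℂ) u v, Ψ (c • u) v = c • Ψ u v) →
      (∀ u v w, Ψ u (v + w) = Ψ u v + Ψ u w) →
      (∀ (c : ℂ) u v, Ψ u (c • v) = (starRingEnd ℂ c) • Ψ u v) →
      (∀ u, Ψ u u ∈ K) →
      ∀ u v, ‖Ψ u v‖ ≤ Real.sqrt ‖Ψ u u‖ * Real.sqrt ‖Ψ v v‖)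
    -- `Γ` is a bounded sesquilinear map on `X`
    (Γ : X → X → X)
    (hΓadd₁ : ∀ x y z : X, Γ (x + y) z = Γ x z + Γ y z)
    (hΓsmul₁ : ∀ (c : ℂ) (x y : X), Γ (c • x) y = c • Γ x y)
    (hΓadd₂ : ∀ x y z : X, Γ x (y + z) = Γ x y + Γ x z)
    (hΓsmul₂ : ∀ (c : ℂ) (x y : X), Γ x (c • y) = (starRingEnd ℂ c) • Γ x y)
    (hΓball : Set.image2 Γ (Metric.closedBall (0 : X) 1) (Metric.closedBall (0 : X) 1) =
      Metric.closedBall (0 : X) 1)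
    -- `Φ` is a bounded, left-invariant sesquilinear map, completely positive w.r.t. `Γ`
    (Φ : A → A → (X →L[ℂ] Y))
    (hadd₁ : ∀ a b c : A, Φ (a + b) c = Φ a c + Φ b c)
    (hsmul₁ : ∀ (c : ℂ) (a b : A), Φ (c • a) b = c • Φ a b)
    (hadd₂ : ∀ a b c : A, Φ a (b + c) = Φ a b + Φ a c)
    (hsmul₂ : ∀ (c : ℂ) (a b : A), Φ a (c • b) = (starRingEnd ℂ c) • Φ a b)
    (hcp : ∀ (n : ℕ) (a : Fin n → A) (x : Fin n → X),
      (∑ i, ∑ j, Φ (a i) (a j) (Γ (x i) (x j))) ∈ K) :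
    ∀ a b : A, ‖Φ a b‖ ≤ Real.sqrt ‖Φ a a‖ * Real.sqrt ‖Φ b b‖ := by
  let φ : A →ₗ[ℂ] A →ₗ⋆[ℂ] X →ₗ[ℂ] Y :=
    (LinearMap.mk₂'ₛₗ (RingHom.id ℂ) _ Φ hadd₁ hsmul₁ hadd₂ hsmul₂).compr₂ₛₗ
      (ContinuousLinearMap.coeLM ℂ)
  let γ : X →ₗ[ℂ] X →ₗ⋆[ℂ] X :=
    LinearMap.mk₂'ₛₗ (RingHom.id ℂ) _ Γ hΓadd₁ hΓsmul₁ hΓadd₂ hΓsmul₂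
  let Ψ := TensorProduct.sesqTensor φ γ
  have hΨ := hCS (Ψ ·) Ψ.map_add₂ Ψ.map_smul₂ (fun u => map_add (Ψ u))
    (fun c u => (Ψ u).map_smulₛₗ c) (TensorProduct.sesqTensor_self_mem φ γ hcp)
  intro a b
  exact ContinuousLinearMap.opNorm_le_sqrt_mul_sqrt_of_image2_closedBall hΓball
    fun x₁ x₂ => hΨ (a ⊗ₜ x₁) (b ⊗ₜ x₂)

/-- Operator-norm Cauchy–Schwarz inequality for a bounded, left-invariant sesquilinear map
`Φ : A × A → B(X,Y)` on a unital normed quasi *-algebra `(A, A₀)` which is completely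
positive with respect to a bounded sesquilinear map `Γ : X × X → X` whose image of the unit
ball times the unit ball is the unit ball, where `Y` is an ordered Banach space for which the
Cauchy–Schwarz inequality holds for `Y`-valued positive sesquilinear maps. -/
theorem operator_norm_cauchy_schwarz {A X Y : Type*}
    [NormedRing A] [StarRing A] [NormedAlgebra ℂ A] [StarModule ℂ A]
    [NormedAddCommGroup X] [NormedSpace ℂ X] [CompleteSpace X]
    [NormedAddCommGroup Y] [NormedSpace ℂ Y] [CompleteSpace Y]
    (A₀ : StarSubalgebra ℂ A)
    (K : Set Y) (hKclosed : IsClosed K) (hK0 : (0 : Y) ∈ K)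
    (hKadd : ∀ y₁ y₂, y₁ ∈ K → y₂ ∈ K → y₁ + y₂ ∈ K)
    (hKsmul : ∀ (r : ℝ) (y : Y), 0 ≤ r → y ∈ K → r • y ∈ K)
    (hKpointed : ∀ y, y ∈ K → -y ∈ K → y = 0)
    -- Cauchy–Schwarz holds for `Y`-valued positive sesquilinear maps
    (hCS : ∀ (Ψ : (A ⊗[ℂ] X) → (A ⊗[ℂ] X) → Y),
      (∀ u v w, Ψ (u + v) w = Ψ u w + Ψ v w) →
      (∀ (c : ℂ) u v, Ψ (c • u) v = c • Ψ u v) →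
      (∀ u v w, Ψ u (v + w) = Ψ u v + Ψ u w) →
      (∀ (c : ℂ) u v, Ψ u (c • v) = (starRingEnd ℂ c) • Ψ u v) →
      (∀ u, Ψ u u ∈ K) →
      ∀ u v, ‖Ψ u v‖ ≤ Real.sqrt ‖Ψ u u‖ * Real.sqrt ‖Ψ v v‖)
    -- `Γ` is a bounded sesquilinear map on `X`
    (Γ : X → X → X)
    (hΓadd₁ : ∀ x y z : X, Γ (x + y) z = Γ x z + Γ y z)
    (hΓsmul₁ : ∀ (c : ℂ) (x y : X), Γ (c • x) y = c • Γ x y)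
    (hΓadd₂ : ∀ x y z : X, Γ x (y + z) = Γ x y + Γ x z)
    (hΓsmul₂ : ∀ (c : ℂ) (x y : X), Γ x (c • y) = (starRingEnd ℂ c) • Γ x y)
    (hΓbdd : ∃ CΓ : ℝ, ∀ x y : X, ‖Γ x y‖ ≤ CΓ * ‖x‖ * ‖y‖)
    (hΓball : Set.image2 Γ (Metric.closedBall (0 : X) 1) (Metric.closedBall (0 : X) 1) =
      Metric.closedBall (0 : X) 1)
    -- `Φ` is a bounded, left-invariant sesquilinear map, completely positive w.r.t. `Γ`
    (Φ : A → A → (X →L[ℂ] Y))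
    (hadd₁ : ∀ a b c : A, Φ (a + b) c = Φ a c + Φ b c)
    (hsmul₁ : ∀ (c : ℂ) (a b : A), Φ (c • a) b = c • Φ a b)
    (hadd₂ : ∀ a b c : A, Φ a (b + c) = Φ a b + Φ a c)
    (hsmul₂ : ∀ (c : ℂ) (a b : A), Φ a (c • b) = (starRingEnd ℂ c) • Φ a b)
    (hbdd : ∃ Mb : ℝ, ∀ a b : A, ‖Φ a b‖ ≤ Mb * ‖a‖ * ‖b‖)
    (hinv : ∀ (a : A) (c d : A), c ∈ A₀ → d ∈ A₀ → Φ (a * c) d = Φ c (star a * d))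
    (hcp : ∀ (n : ℕ) (a : Fin n → A) (x : Fin n → X),
      (∑ i, ∑ j, Φ (a i) (a j) (Γ (x i) (x j))) ∈ K) :
    ∀ a b : A, ‖Φ a b‖ ≤ Real.sqrt ‖Φ a a‖ * Real.sqrt ‖Φ b b‖ :=
  operator_norm_cauchy_schwarz_general K hCS Γ hΓadd₁ hΓsmul₁ hΓadd₂ hΓsmul₂ hΓball Φ hadd₁ hsmul₁
    hadd₂ hsmul₂ hcp
end
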